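/- Let $x, z \in \mathbb{R}^2$ with $x \neq z$, and let $t_1 \neq t_2$ be positive times with $t_i > |x - z|$. Suppose $\tilde p(t_i) = A\, t_i\,(t_i^2 - |x-z|^2)^{-3/2}$ for $i = 1,2$ with $A \neq 0$. Then $(t_2\tilde p(t_1))^{2/3} \neq (t_1 \tilde p(t_2))^{2/3}$ and $|x - z|^2 = \frac{t_1^2 (t_2\tilde p(t_1))^{2/3} - t_2^2 (t_1\tilde p(t_2))^{2/3}}{(t_2\tilde p(t_1))^{2/3} - (t_1 \tilde p(t_2))^{2/3}}$. -/
import Mathlib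

open Real

lemma key_rpow (B : ℝ) (hB : B ≠ 0) : ∃ C : ℝ, C ≠ 0 ∧ ∀ u : ℝ, 0 < u →
    (B * u ^ (-(3 : ℝ) / 2)) ^ ((2 : ℝ) / 3) = C / u := by
  rcases hB.lt_or_gt with h | h
  · refine ⟨Real.exp (Real.log B * (2 / 3)) * Real.cos (2 / 3 * Real.pi), ?_, ?_⟩
    · have hc : Real.cos (2 / 3 * Real.pi) = -(1 / 2) := by
        have : (2 / 3 : ℝ) * Real.pi = Real.pi - Real.pi / 3 := by ring
        rw [this, Real.cos_pi_sub, Real.cos_pi_div_three]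
      rw [hc]
      positivity
    · intro u hu
      have hk : 0 < u ^ (-(3 : ℝ) / 2) := Real.rpow_pos_of_pos hu _
      have hneg : B * u ^ (-(3 : ℝ) / 2) < 0 := mul_neg_of_neg_of_pos h hk
      rw [Real.rpow_def_of_neg hneg, Real.log_mul h.ne hk.ne',
        Real.log_rpow hu]
      have harg : (Real.log B + -(3 : ℝ) / 2 * Real.log u) * (2 / 3)
          = Real.log B * (2 / 3) + -Real.log u := by ring
      rw [harg, Real.exp_add, Real.exp_neg, Real.exp_log hu]
      ring
  · refine ⟨B ^ ((2 : ℝ) / 3), (Real.rpow_pos_of_pos h _).ne', ?_⟩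
    intro u hu
    rw [Real.mul_rpow h.le (Real.rpow_pos_of_pos hu _).le, ← Real.rpow_mul hu.le]
    norm_num
    rw [Real.rpow_neg_one]
    ring

/-- exact localization formula. If `p̃(tᵢ) = A tᵢ (tᵢ² - |x-z|²)^(-3/2)` for
two distinct times `tᵢ > |x-z|`, with `A ≠ 0` and `x ≠ z`, then
`(t₂p̃(t₁))^(2/3) ≠ (t₁p̃(t₂))^(2/3)` and
`|x-z|² = (t₁²(t₂p̃(t₁))^(2/3) - t₂²(t₁p̃(t₂))^(2/3)) / ((t₂p̃(t₁))^(2/3) - (t₁p̃(t₂))^(2/3))`. -/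
theorem stmt11 (x z : EuclideanSpace ℝ (Fin 2)) (hxz : x ≠ z)
    (t1 t2 A : ℝ) (ht1 : ‖x - z‖ < t1) (ht2 : ‖x - z‖ < t2) (ht : t1 ≠ t2) (hA : A ≠ 0)
    (p1 p2 : ℝ)
    (hp1 : p1 = A * t1 * (t1 ^ 2 - ‖x - z‖ ^ 2) ^ (-(3 : ℝ) / 2))
    (hp2 : p2 = A * t2 * (t2 ^ 2 - ‖x - z‖ ^ 2) ^ (-(3 : ℝ) / 2)) :
    (t2 * p1) ^ ((2 : ℝ) / 3) ≠ (t1 * p2) ^ ((2 : ℝ) / 3) ∧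
    ‖x - z‖ ^ 2
      = (t1 ^ 2 * (t2 * p1) ^ ((2 : ℝ) / 3) - t2 ^ 2 * (t1 * p2) ^ ((2 : ℝ) / 3))
        / ((t2 * p1) ^ ((2 : ℝ) / 3) - (t1 * p2) ^ ((2 : ℝ) / 3)) := by
  set r : ℝ := ‖x - z‖ with hrdef
  have hr0 : 0 < r := by
    rw [hrdef]
    exact norm_pos_iff.mpr (sub_ne_zero.mpr hxz)
  have ht10 : 0 < t1 := lt_trans hr0 ht1
  have ht20 : 0 < t2 := lt_trans hr0 ht2
  have hu1 : 0 < t1 ^ 2 - r ^ 2 := by nlinarith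
  have hu2 : 0 < t2 ^ 2 - r ^ 2 := by nlinarith
  have hB : A * t1 * t2 ≠ 0 := by positivity
  obtain ⟨C, hC, hCeq⟩ := key_rpow (A * t1 * t2) hB
  have hq1 : (t2 * p1) ^ ((2 : ℝ) / 3) = C / (t1 ^ 2 - r ^ 2) := by
    have : t2 * p1 = A * t1 * t2 * (t1 ^ 2 - r ^ 2) ^ (-(3 : ℝ) / 2) := by
      rw [hp1]; ring
    rw [this, hCeq _ hu1]
  have hq2 : (t1 * p2) ^ ((2 : ℝ) / 3) = C / (t2 ^ 2 - r ^ 2) := by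
    have : t1 * p2 = A * t1 * t2 * (t2 ^ 2 - r ^ 2) ^ (-(3 : ℝ) / 2) := by
      rw [hp2]; ring
    rw [this, hCeq _ hu2]
  have hne : (t2 * p1) ^ ((2 : ℝ) / 3) ≠ (t1 * p2) ^ ((2 : ℝ) / 3) := by
    rw [hq1, hq2]
    intro h
    rw [div_eq_div_iff hu1.ne' hu2.ne'] at h
    have hu : t2 ^ 2 - r ^ 2 = t1 ^ 2 - r ^ 2 := mul_left_cancel₀ hC h
    have h12 : t1 ^ 2 = t2 ^ 2 := by linarith
    apply ht
    have h1 : Real.sqrt (t1 ^ 2) = Real.sqrt (t2 ^ 2) := by rw [h12]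
    rwa [Real.sqrt_sq ht10.le, Real.sqrt_sq ht20.le] at h1
  refine ⟨hne, ?_⟩
  rw [hq1, hq2] at hne ⊢
  rw [eq_div_iff (sub_ne_zero.mpr hne)]
  field_simp
  ring
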